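/- arXiv:2510.17562 — 4 statements merged into one kernel-verified Lean document; each statement's English description precedes it below -/
import Mathlib

section
/- Let g be a ground truth and p, q predictions of length n, and let α, β be as specified. Suppose A ∈ I_1(g), p(i) = q(i) for all i ∉ A, |I_1(p_A)| > 0, and |I_1(q_A)| = 0. Then LARM(g,p) > LARM(g,q). (LARM satisfies the Detection of Anomalies property.) -/
namespace TSAD

open Finset

/-- The index domain `{1, …, n}`. -/
def dom (n : ℕ) : Finset ℕ := Finset.Icc 1 n

/-- The interval `[l, u]` represented by a pair. -/
def ivl (W : ℕ × ℕ) : Finset ℕ := Finset.Icc W.1 W.2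

/-- The positions in `A` where the binary sequence `s` takes the value `1` (`true`). -/
def ones (A : Finset ℕ) (s : ℕ → Bool) : Finset ℕ := A.filter (fun i => s i = true)

/-- `runs A s v` is the set of maximal intervals `[l, u] ⊆ A` on which `s` is constantly `v`
(maximal among intervals contained in `A`).  For `A = dom n` this is `I_v(s)`;
for `A ⊆ dom n` it is `I_v(s_A)`. -/
def runs (A : Finset ℕ) (s : ℕ → Bool) (v : Bool) : Finset (ℕ × ℕ) :=
  (A ×ˢ A).filter (fun W =>
    W.1 ≤ W.2 ∧ ivl W ⊆ A ∧ (∀ i ∈ ivl W, s i = v) ∧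
    (W.1 - 1 ∈ A → s (W.1 - 1) ≠ v) ∧ (W.2 + 1 ∈ A → s (W.2 + 1) ≠ v))

/-- Specification of the function `α` used in the (A)LARM scores: it assigns to each
restriction `p_A` a value in `[0,1)`, depends only on the restriction, strictly increases
when a single `0` of `p_A` is changed to a `1`, satisfies alarm timing, and early bias. -/
structure AlphaSpec (α : Finset ℕ → (ℕ → Bool) → ℝ) : Prop where
  mem_Ico : ∀ A p, α A p ∈ Set.Ico (0 : ℝ) 1
  restrict : ∀ A (p q : ℕ → Bool), (∀ i ∈ A, p i = q i) → α A p = α A q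
  mono : ∀ A (p q : ℕ → Bool) (i : ℕ), i ∈ A → p i = true → q i = false →
    (∀ j, j ≠ i → p j = q j) → α A q < α A p
  timing : ∀ A (p q : ℕ → Bool), (ones A p).card = (ones A q).card →
    ∀ (hp : (ones A p).Nonempty) (hq : (ones A q).Nonempty),
      (ones A p).min' hp < (ones A q).min' hq → α A q < α A p
  earlyBias : ∀ A (p q : ℕ → Bool) (i j : ℕ), i ∈ A → j ∈ A → i < j →
    p i = true → p j = false → q i = false → q j = true →
    (∀ k, k ≠ i → k ≠ j → p k = q k) → α A q < α A p

/-- Specification of the function `β` used in the (A)LARM scores: strictly increasing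
with values in `[0,1]`. -/
structure BetaSpec (β : ℕ → ℝ) : Prop where
  mem_Icc : ∀ k, β k ∈ Set.Icc (0 : ℝ) 1
  strictMono : StrictMono β

/-- The LARM score. -/
noncomputable def LARM (n : ℕ) (α : Finset ℕ → (ℕ → Bool) → ℝ) (β : ℕ → ℝ)
    (g p : ℕ → Bool) : ℝ :=
  (1 / ((runs (dom n) g true).card : ℝ)) *
    ∑ A ∈ (runs (dom n) g true).filter (fun A => 0 < (runs (ivl A) p true).card),
      (α (ivl A) p + 1) / 2 ^ ((runs (ivl A) p true).card)
  - 2 * ∑ N ∈ runs (dom n) g false, ((runs (ivl N) p true).card : ℝ)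
  - ∑ N ∈ runs (dom n) g false, β ((ones (ivl N) p).card)

/-- `I_{01}(g)`: intervals that are a maximal `0`-run immediately followed by a maximal
`1`-run. -/
def runs01 (n : ℕ) (g : ℕ → Bool) : Finset (ℕ × ℕ) :=
  ((dom n) ×ˢ (dom n)).filter (fun W =>
    ∃ b ∈ Finset.Ico W.1 W.2,
      (W.1, b) ∈ runs (dom n) g false ∧ (b + 1, W.2) ∈ runs (dom n) g true)

/-- `I_{10}(g)`: intervals that are a maximal `1`-run immediately followed by a maximal
`0`-run. -/
def runs10 (n : ℕ) (g : ℕ → Bool) : Finset (ℕ × ℕ) :=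
  ((dom n) ×ˢ (dom n)).filter (fun W =>
    ∃ b ∈ Finset.Ico W.1 W.2,
      (W.1, b) ∈ runs (dom n) g true ∧ (b + 1, W.2) ∈ runs (dom n) g false)

/-- Early alarms `EA(p,g)`. -/
def EA (n : ℕ) (p g : ℕ → Bool) : Finset (ℕ × ℕ) :=
  ((dom n) ×ˢ (dom n)).filter (fun A =>
    (∃ I ∈ runs01 n g, A ∈ runs (ivl I) p true) ∧
    (∃ i ∈ ivl A, g i = true) ∧ (∃ i ∈ ivl A, g i = false))

/-- Late alarms `LA(p,g)`. -/
def LA (n : ℕ) (p g : ℕ → Bool) : Finset (ℕ × ℕ) :=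
  ((dom n) ×ˢ (dom n)).filter (fun A =>
    (∃ I ∈ runs10 n g, A ∈ runs (ivl I) p true) ∧
    (∃ i ∈ ivl A, g i = true) ∧ (∃ i ∈ ivl A, g i = false))

/-- True false alarms `TA(p,g)`. -/
def TA (n : ℕ) (p g : ℕ → Bool) : Finset (ℕ × ℕ) :=
  (runs (dom n) p true).filter (fun A =>
    (∀ i ∈ ivl A, g i = false) ∧
    ∀ B ∈ EA n p g ∪ LA n p g, ¬ ivl A ⊆ ivl B)

/-- Detected anomalies `DA(p,g)`. -/
def DA (n : ℕ) (p g : ℕ → Bool) : Finset (ℕ × ℕ) :=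
  (runs (dom n) g true).filter (fun A =>
    ∃ B ∈ runs (dom n) p true,
      (ivl B ∩ ivl A).Nonempty ∧
      (B.1 ∈ ivl A ∨ ∀ i ∈ Finset.Ico B.1 A.1, g i = false))

/-- The ALARM score with alarm tolerance `t` (the averaged term is `0` when
`DA(p,g) = ∅`, since in Lean `0 / 0 = 0`). -/
noncomputable def ALARM (n t : ℕ) (α : Finset ℕ → (ℕ → Bool) → ℝ) (β : ℕ → ℝ)
    (g p : ℕ → Bool) : ℝ :=
  ((DA n p g).card : ℝ)
  + (∑ A ∈ DA n p g, (α (ivl A) p + 1) / 2 ^ ((runs (ivl A) p true).card)) /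
      ((DA n p g).card : ℝ)
  - β (((dom n).filter (fun i => p i = true ∧ g i = false)).card)
  - (1 / (t : ℝ)) * (((TA n p g).card : ℝ) + (3 / 2) * ((EA n p g).card : ℝ)
      + (1 / 2) * ((LA n p g).card : ℝ))

/-- Point-wise Recall. -/
noncomputable def recallPW (n : ℕ) (g p : ℕ → Bool) : ℝ :=
  (((dom n).filter (fun i => p i = true ∧ g i = true)).card : ℝ) /
    ((ones (dom n) g).card : ℝ)

/-- Point-wise F1-score. -/
noncomputable def f1PW (n : ℕ) (g p : ℕ → Bool) : ℝ :=
  2 * (((dom n).filter (fun i => p i = true ∧ g i = true)).card : ℝ) /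
    (((ones (dom n) p).card : ℝ) + ((ones (dom n) g).card : ℝ))

/-- Total length of the ground-truth anomaly windows hit by `p`. -/
def Spa (n : ℕ) (g p : ℕ → Bool) : ℕ :=
  ∑ W ∈ (runs (dom n) g true).filter (fun W => ∃ i ∈ ivl W, p i = true), (ivl W).card

/-- Point-adjusted Recall. -/
noncomputable def recallPA (n : ℕ) (g p : ℕ → Bool) : ℝ :=
  ((Spa n g p : ℝ)) / ((ones (dom n) g).card : ℝ)

/-- Point-adjusted F1-score. -/
noncomputable def f1PA (n : ℕ) (g p : ℕ → Bool) : ℝ :=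
  2 * (Spa n g p : ℝ) /
    ((Spa n g p : ℝ) + (((dom n).filter (fun i => p i = true ∧ g i = false)).card : ℝ)
      + ((ones (dom n) g).card : ℝ))

/-- Point-wise Precision. -/
noncomputable def precisionPW (n : ℕ) (g p : ℕ → Bool) : ℝ :=
  (((dom n).filter (fun i => p i = true ∧ g i = true)).card : ℝ) /
    ((ones (dom n) p).card : ℝ)

/-- Event-wise Recall. -/
noncomputable def recallEvent (n : ℕ) (g p : ℕ → Bool) : ℝ :=
  (((runs (dom n) g true).filter (fun W => ∃ i ∈ ivl W, p i = true)).card : ℝ) /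
    ((runs (dom n) g true).card : ℝ)

/-- Composite F1-score. -/
noncomputable def Fc1 (n : ℕ) (g p : ℕ → Bool) : ℝ :=
  2 * precisionPW n g p * recallEvent n g p / (precisionPW n g p + recallEvent n g p)

/-- Distance from `i` to the closest element of `S`. -/
noncomputable def minDist (i : ℕ) (S : Finset ℕ) : ℕ :=
  sInf {d : ℕ | ∃ j ∈ S, d = ((i : ℤ) - (j : ℤ)).natAbs}

/-- Temporal Distance. -/
noncomputable def TD (n : ℕ) (g p : ℕ → Bool) : ℕ :=
  ∑ i ∈ ones (dom n) g, minDist i (ones (dom n) p)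
  + ∑ i ∈ ones (dom n) p, minDist i (ones (dom n) g)

/-- The set of ground-truth anomaly windows hit by `p`. -/
def Dset (n : ℕ) (g p : ℕ → Bool) : Finset (ℕ × ℕ) :=
  (runs (dom n) g true).filter (fun W => ∃ i ∈ ivl W, p i = true)

/-- Delay of the first alarm of `p` within the window `W`. -/
noncomputable def delay (p : ℕ → Bool) (W : ℕ × ℕ) : ℕ :=
  sInf {i : ℕ | i ∈ ivl W ∧ p i = true} - W.1

/-- Average Alert Delay. -/
noncomputable def AAD (n : ℕ) (g p : ℕ → Bool) : ℝ :=
  (∑ W ∈ Dset n g p, (delay p W : ℝ)) / ((Dset n g p).card : ℝ)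


/-- `runs` only depends on the restriction of `s` to `A`. -/
lemma runs_congr (A : Finset ℕ) (p q : ℕ → Bool) (h : ∀ i ∈ A, p i = q i) (v : Bool) :
    runs A p v = runs A q v := by
  unfold runs
  apply Finset.filter_congr
  intro W _
  constructor
  · rintro ⟨h1, h2, h3, h4, h5⟩
    exact ⟨h1, h2, fun i hi => (h i (h2 hi)) ▸ h3 i hi,
      fun hm => (h _ hm) ▸ h4 hm, fun hm => (h _ hm) ▸ h5 hm⟩
  · rintro ⟨h1, h2, h3, h4, h5⟩
    exact ⟨h1, h2, fun i hi => (h i (h2 hi)).symm ▸ h3 i hi,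
      fun hm => (h _ hm).symm ▸ h4 hm, fun hm => (h _ hm).symm ▸ h5 hm⟩

/-- `ones` only depends on the restriction of `s` to `A`. -/
lemma ones_congr (A : Finset ℕ) (p q : ℕ → Bool) (h : ∀ i ∈ A, p i = q i) :
    ones A p = ones A q := by
  unfold ones
  apply Finset.filter_congr
  intro i hi
  rw [h i hi]

/-- Two maximal `v`-runs sharing a point coincide. -/
lemma runs_eq_of_mem_ivl {D : Finset ℕ} {s : ℕ → Bool} {v : Bool} {B C : ℕ × ℕ}
    (hB : B ∈ runs D s v) (hC : C ∈ runs D s v) {i : ℕ}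
    (hiB : i ∈ ivl B) (hiC : i ∈ ivl C) : B = C := by
  simp only [runs, Finset.mem_filter] at hB hC
  obtain ⟨-, hB1, hB2, hB3, hB4, hB5⟩ := hB
  obtain ⟨-, hC1, hC2, hC3, hC4, hC5⟩ := hC
  simp only [ivl, Finset.mem_Icc] at hiB hiC
  have hl : B.1 = C.1 := by
    by_contra hne
    rcases Nat.lt_or_ge B.1 C.1 with h | h
    · have hm : C.1 - 1 ∈ ivl B := by
        simp only [ivl, Finset.mem_Icc]; omega
      exact hC4 (hB2 hm) (hB3 _ hm)
    · have h' : C.1 < B.1 := lt_of_le_of_ne h (fun e => hne e.symm)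
      have hm : B.1 - 1 ∈ ivl C := by
        simp only [ivl, Finset.mem_Icc]; omega
      exact hB4 (hC2 hm) (hC3 _ hm)
  have hu : B.2 = C.2 := by
    by_contra hne
    rcases Nat.lt_or_ge B.2 C.2 with h | h
    · have hm : B.2 + 1 ∈ ivl C := by
        simp only [ivl, Finset.mem_Icc]; omega
      exact hB5 (hC2 hm) (hC3 _ hm)
    · have h' : C.2 < B.2 := lt_of_le_of_ne h (fun e => hne e.symm)
      have hm : C.2 + 1 ∈ ivl B := by
        simp only [ivl, Finset.mem_Icc]; omega
      exact hC5 (hB2 hm) (hB3 _ hm)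
  exact Prod.ext hl hu

/-- LARM satisfies the Detection of Anomalies property (Property 1). -/
theorem larm_detection (n : ℕ) (hn : 1 ≤ n)
    (α : Finset ℕ → (ℕ → Bool) → ℝ) (β : ℕ → ℝ)
    (hα : AlphaSpec α) (hβ : BetaSpec β)
    (g p q : ℕ → Bool) (A : ℕ × ℕ) (hA : A ∈ runs (dom n) g true)
    (hpq : ∀ i ∈ dom n, i ∉ ivl A → p i = q i)
    (hp : 0 < (runs (ivl A) p true).card)
    (hq : (runs (ivl A) q true).card = 0) :
    LARM n α β g p > LARM n α β g q := by
  have hAmem := hA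
  simp only [runs, Finset.mem_filter] at hAmem
  obtain ⟨-, -, hAsub, hAg, -, -⟩ := hAmem
  -- agreement of p and q off ivl A, on runs of g
  have agree_true : ∀ B ∈ runs (dom n) g true, B ≠ A → ∀ i ∈ ivl B, p i = q i := by
    intro B hB hBA i hi
    by_cases hiA : i ∈ ivl A
    · exact absurd (runs_eq_of_mem_ivl hB hA hi hiA) hBA
    · have hBsub : ivl B ⊆ dom n := by
        simp only [runs, Finset.mem_filter] at hB; exact hB.2.2.1
      exact hpq i (hBsub hi) hiA
  have agree_false : ∀ N ∈ runs (dom n) g false, ∀ i ∈ ivl N, p i = q i := by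
    intro N hN i hi
    simp only [runs, Finset.mem_filter] at hN
    by_cases hiA : i ∈ ivl A
    · have h1 := hAg i hiA
      have h2 := hN.2.2.2.1 i hi
      rw [h1] at h2; exact absurd h2 (by simp)
    · exact hpq i (hN.2.2.1 hi) hiA
  -- the penalty sums coincide
  have hsum2 : ∑ N ∈ runs (dom n) g false, ((runs (ivl N) p true).card : ℝ)
      = ∑ N ∈ runs (dom n) g false, ((runs (ivl N) q true).card : ℝ) := by
    refine Finset.sum_congr rfl fun N hN => ?_
    rw [runs_congr (ivl N) p q (agree_false N hN) true]
  have hsum3 : ∑ N ∈ runs (dom n) g false, β ((ones (ivl N) p).card)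
      = ∑ N ∈ runs (dom n) g false, β ((ones (ivl N) q).card) := by
    refine Finset.sum_congr rfl fun N hN => ?_
    rw [ones_congr (ivl N) p q (agree_false N hN)]
  -- the filtered sets
  set S := runs (dom n) g true with hS
  set Fp := S.filter (fun B => 0 < (runs (ivl B) p true).card) with hFp
  set Fq := S.filter (fun B => 0 < (runs (ivl B) q true).card) with hFq
  have hAnotFq : A ∉ Fq := by
    simp only [hFq, Finset.mem_filter]
    rintro ⟨-, h⟩; omega
  have hFpeq : Fp = insert A Fq := by
    ext B
    simp only [hFp, hFq, Finset.mem_filter, Finset.mem_insert]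
    constructor
    · rintro ⟨hB, hcard⟩
      by_cases hBA : B = A
      · exact Or.inl hBA
      · exact Or.inr ⟨hB, by rwa [runs_congr (ivl B) p q (agree_true B hB hBA) true] at hcard⟩
    · rintro (rfl | ⟨hB, hcard⟩)
      · exact ⟨hA, hp⟩
      · by_cases hBA : B = A
        · subst hBA; exact ⟨hB, hp⟩
        · exact ⟨hB, by rwa [runs_congr (ivl B) p q (agree_true B hB hBA) true]⟩
  have hsum1 : ∑ B ∈ Fp, (α (ivl B) p + 1) / 2 ^ ((runs (ivl B) p true).card)
      = (α (ivl A) p + 1) / 2 ^ ((runs (ivl A) p true).card)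
        + ∑ B ∈ Fq, (α (ivl B) q + 1) / 2 ^ ((runs (ivl B) q true).card) := by
    rw [hFpeq, Finset.sum_insert hAnotFq]
    congr 1
    refine Finset.sum_congr rfl fun B hB => ?_
    have hBmem : B ∈ S := (Finset.mem_filter.mp hB).1
    have hBA : B ≠ A := fun e => hAnotFq (e ▸ hB)
    rw [runs_congr (ivl B) p q (agree_true B hBmem hBA) true,
      hα.restrict (ivl B) p q (agree_true B hBmem hBA)]
  -- positivity facts
  have hcardS : 0 < (S.card : ℝ) := by
    have : A ∈ S := hA
    exact_mod_cast Finset.card_pos.mpr ⟨A, this⟩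
  have htermA : 0 < (α (ivl A) p + 1) / 2 ^ ((runs (ivl A) p true).card) := by
    have h0 := (hα.mem_Ico (ivl A) p).1
    positivity
  unfold LARM
  rw [← hS, ← hFp, ← hFq, hsum1, hsum2, hsum3, mul_add]
  have : 0 < 1 / (S.card : ℝ) * ((α (ivl A) p + 1) / 2 ^ ((runs (ivl A) p true).card)) := by
    positivity
  linarith

end TSAD
end

section
/- Let g be a ground truth and p, q predictions of length n, and let α, β be as specified. Suppose N ∈ I_0(g), i* ∈ N, p(i) = q(i) for all i ≠ i*, q(i*) = 1, p(i*) = 0, and |I_1(p_N)| = |I_1(q_N)|. Then LARM(g,p) > LARM(g,q). (LARM satisfies the Minimizing False Positives property.) -/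
namespace TSAD

open Finset

/-- LARM satisfies the Minimizing False Positives property (Property 3). -/
theorem larm_min_false_positives (n : ℕ) (hn : 1 ≤ n)
    (α : Finset ℕ → (ℕ → Bool) → ℝ) (β : ℕ → ℝ)
    (hα : AlphaSpec α) (hβ : BetaSpec β)
    (g p q : ℕ → Bool) (N : ℕ × ℕ) (hN : N ∈ runs (dom n) g false)
    (iStar : ℕ) (hi : iStar ∈ ivl N)
    (hpq : ∀ i ∈ dom n, i ≠ iStar → p i = q i)
    (hqi : q iStar = true) (hpi : p iStar = false)
    (hcard : (runs (ivl N) p true).card = (runs (ivl N) q true).card) :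
    LARM n α β g p > LARM n α β g q := by
  classical
  have hNr := hN
  simp only [runs, Finset.mem_filter, Finset.mem_product] at hNr
  obtain ⟨⟨hN1, hN2⟩, hNle, hNsub, hNfalse, hNbl, hNbr⟩ := hNr
  have hgI : g iStar = false := hNfalse _ hi
  -- p and q agree on any set avoiding iStar
  have agree : ∀ A : Finset ℕ, A ⊆ dom n → iStar ∉ A → ∀ i ∈ A, p i = q i := by
    intro A hA hni i hiA
    exact hpq i (hA hiA) (fun h => hni (h ▸ hiA))
  have runs_eq : ∀ A : Finset ℕ, (∀ i ∈ A, p i = q i) →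
      runs A p true = runs A q true := by
    intro A h
    unfold runs
    refine Finset.filter_congr ?_
    intro W _
    constructor
    · rintro ⟨h1, h2, h3, h4, h5⟩
      refine ⟨h1, h2, fun i hiW => by rw [← h i (h2 hiW)]; exact h3 i hiW, ?_, ?_⟩
      · intro hm; rw [← h _ hm]; exact h4 hm
      · intro hm; rw [← h _ hm]; exact h5 hm
    · rintro ⟨h1, h2, h3, h4, h5⟩
      refine ⟨h1, h2, fun i hiW => by rw [h i (h2 hiW)]; exact h3 i hiW, ?_, ?_⟩
      · intro hm; rw [h _ hm]; exact h4 hm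
      · intro hm; rw [h _ hm]; exact h5 hm
  have ones_eq : ∀ A : Finset ℕ, (∀ i ∈ A, p i = q i) → ones A p = ones A q := by
    intro A h
    unfold ones
    exact Finset.filter_congr (fun i hiA => by rw [h i hiA])
  -- anomaly windows avoid iStar
  have hanom : ∀ A ∈ runs (dom n) g true, ∀ i ∈ ivl A, p i = q i := by
    intro A hA
    simp only [runs, Finset.mem_filter, Finset.mem_product] at hA
    obtain ⟨-, -, hsub, htrue, -, -⟩ := hA
    refine agree _ hsub (fun hmem => ?_)
    have := htrue iStar hmem
    rw [hgI] at this
    exact absurd this (by simp)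
  -- uniqueness of the 0-run containing iStar
  have huniq : ∀ M ∈ runs (dom n) g false, iStar ∈ ivl M → M = N := by
    intro M hM hiM
    simp only [runs, Finset.mem_filter, Finset.mem_product] at hM
    obtain ⟨⟨hM1, hM2⟩, hMle, hMsub, hMfalse, hMbl, hMbr⟩ := hM
    have hi' := hi
    simp only [ivl, Finset.mem_Icc] at hi' hiM
    simp only [dom, Finset.mem_Icc] at hM1 hN1
    have hleft : M.1 = N.1 := by
      by_contra hne
      rcases Nat.lt_or_ge M.1 N.1 with h | h
      · have hmem : N.1 - 1 ∈ ivl M := by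
          simp only [ivl, Finset.mem_Icc]; omega
        exact hNbl (hMsub hmem) (hMfalse _ hmem)
      · have hmem : M.1 - 1 ∈ ivl N := by
          simp only [ivl, Finset.mem_Icc]; omega
        exact hMbl (hNsub hmem) (hNfalse _ hmem)
    have hright : M.2 = N.2 := by
      by_contra hne
      rcases Nat.lt_or_ge M.2 N.2 with h | h
      · have hmem : M.2 + 1 ∈ ivl N := by
          simp only [ivl, Finset.mem_Icc]; omega
        exact hMbr (hNsub hmem) (hNfalse _ hmem)
      · have hmem : N.2 + 1 ∈ ivl M := by
          simp only [ivl, Finset.mem_Icc]; omega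
        exact hNbr (hMsub hmem) (hMfalse _ hmem)
    exact Prod.ext hleft hright
  -- other 0-runs avoid iStar
  have hzero : ∀ M ∈ runs (dom n) g false, M ≠ N → ∀ i ∈ ivl M, p i = q i := by
    intro M hM hne
    have hsub : ivl M ⊆ dom n := by
      have hM' := hM
      simp only [runs, Finset.mem_filter, Finset.mem_product] at hM'
      exact hM'.2.2.1
    exact agree _ hsub (fun hmem => hne (huniq M hM hmem))
  have hruns_anom : ∀ A ∈ runs (dom n) g true,
      runs (ivl A) p true = runs (ivl A) q true :=
    fun A hA => runs_eq _ (hanom A hA)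
  -- first summand equal
  have hT1 : ∑ A ∈ (runs (dom n) g true).filter
        (fun A => 0 < (runs (ivl A) p true).card),
      (α (ivl A) p + 1) / 2 ^ ((runs (ivl A) p true).card)
      = ∑ A ∈ (runs (dom n) g true).filter
        (fun A => 0 < (runs (ivl A) q true).card),
      (α (ivl A) q + 1) / 2 ^ ((runs (ivl A) q true).card) := by
    rw [Finset.filter_congr (fun A hA => by rw [hruns_anom A hA])]
    refine Finset.sum_congr rfl (fun A hA => ?_)
    have hA' := (Finset.mem_filter.mp hA).1
    rw [hα.restrict (ivl A) p q (hanom A hA'), hruns_anom A hA']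
  -- second summand equal
  have hruns_zero : ∀ M ∈ runs (dom n) g false,
      (runs (ivl M) p true).card = (runs (ivl M) q true).card := by
    intro M hM
    by_cases hMN : M = N
    · subst hMN; exact hcard
    · rw [runs_eq _ (hzero M hM hMN)]
  have hT2 : ∑ M ∈ runs (dom n) g false, ((runs (ivl M) p true).card : ℝ)
      = ∑ M ∈ runs (dom n) g false, ((runs (ivl M) q true).card : ℝ) :=
    Finset.sum_congr rfl (fun M hM => by rw [hruns_zero M hM])
  -- third summand: differs exactly by β(c+1) - β(c)
  have honesN : (ones (ivl N) q).card = (ones (ivl N) p).card + 1 := by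
    have hset : ones (ivl N) q = insert iStar (ones (ivl N) p) := by
      unfold ones
      ext j
      simp only [Finset.mem_insert, Finset.mem_filter]
      constructor
      · rintro ⟨hj, hjq⟩
        by_cases hji : j = iStar
        · exact Or.inl hji
        · exact Or.inr ⟨hj, by rw [hpq j (hNsub hj) hji]; exact hjq⟩
      · rintro (h | ⟨hj, hjp⟩)
        · subst h; exact ⟨hi, hqi⟩
        · refine ⟨hj, ?_⟩
          by_cases hji : j = iStar
          · subst hji; exact hqi
          · rw [← hpq j (hNsub hj) hji]; exact hjp
    rw [hset, Finset.card_insert_of_notMem]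
    simp [ones, hpi]
  have hT3 : ∑ M ∈ runs (dom n) g false, β ((ones (ivl M) q).card)
      = ∑ M ∈ runs (dom n) g false, β ((ones (ivl M) p).card)
        + (β ((ones (ivl N) p).card + 1) - β ((ones (ivl N) p).card)) := by
    rw [← Finset.add_sum_erase _ (fun M => β ((ones (ivl M) q).card)) hN,
        ← Finset.add_sum_erase _ (fun M => β ((ones (ivl M) p).card)) hN]
    have herase : ∑ M ∈ (runs (dom n) g false).erase N, β ((ones (ivl M) q).card)
        = ∑ M ∈ (runs (dom n) g false).erase N, β ((ones (ivl M) p).card) := by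
      refine Finset.sum_congr rfl (fun M hM => ?_)
      obtain ⟨hne, hM'⟩ := Finset.mem_erase.mp hM
      rw [ones_eq _ (hzero M hM' hne)]
    rw [herase, honesN]
    ring
  have hlt : β ((ones (ivl N) p).card) < β ((ones (ivl N) p).card + 1) :=
    hβ.strictMono (Nat.lt_succ_self _)
  unfold LARM
  rw [hT1, hT2, hT3]
  linarith

end TSAD
end

section
/- Let g be a ground truth and p, q predictions of length n, and let α, β be as specified. Suppose A ∈ I_1(g), p(i) = q(i) for all i ∉ A, |I_1(p_A)| = |I_1(q_A)|, |p^{-1}(1)| = |q^{-1}(1)|, both p and q take the value 1 somewhere in A, and min{i ∈ A : p(i) = 1} < min{i ∈ A : q(i) = 1}. Then LARM(g,p) > LARM(g,q). (LARM satisfies the Alarm Timing property.) -/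
namespace TSAD

open Finset

lemma mem_runs {A : Finset ℕ} {s : ℕ → Bool} {v : Bool} {W : ℕ × ℕ} :
    W ∈ runs A s v ↔ W.1 ∈ A ∧ W.2 ∈ A ∧ W.1 ≤ W.2 ∧ ivl W ⊆ A ∧
      (∀ i ∈ ivl W, s i = v) ∧
      (W.1 - 1 ∈ A → s (W.1 - 1) ≠ v) ∧ (W.2 + 1 ∈ A → s (W.2 + 1) ≠ v) := by
  simp [runs, Finset.mem_filter, Finset.mem_product, and_assoc]

lemma runs_eq_of_eqOn {A : Finset ℕ} {p q : ℕ → Bool} (h : ∀ i ∈ A, p i = q i) (v : Bool) :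
    runs A p v = runs A q v := by
  have key : ∀ (p q : ℕ → Bool), (∀ i ∈ A, p i = q i) → runs A p v ⊆ runs A q v := by
    intro p q h W hW
    rw [mem_runs] at hW ⊢
    obtain ⟨h1, h2, hle, hsub, hall, hl, hr⟩ := hW
    refine ⟨h1, h2, hle, hsub, fun i hi => (h i (hsub hi)) ▸ hall i hi, ?_, ?_⟩
    · intro hm; rw [← h _ hm]; exact hl hm
    · intro hm; rw [← h _ hm]; exact hr hm
  exact le_antisymm (key p q h) (key q p fun i hi => (h i hi).symm)

lemma ones_eq_of_eqOn {A : Finset ℕ} {p q : ℕ → Bool} (h : ∀ i ∈ A, p i = q i) :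
    ones A p = ones A q := by
  apply Finset.filter_congr
  intro i hi
  rw [h i hi]

/-- Two maximal runs with the same value that overlap are equal. -/
lemma runs_eq_of_overlap {D : Finset ℕ} {g : ℕ → Bool} {v : Bool} {A B : ℕ × ℕ}
    (hA : A ∈ runs D g v) (hB : B ∈ runs D g v) (h : (ivl A ∩ ivl B).Nonempty) :
    A = B := by
  rw [mem_runs] at hA hB
  obtain ⟨hA1, hA2, hAle, hAsub, hAall, hAl, hAr⟩ := hA
  obtain ⟨hB1, hB2, hBle, hBsub, hBall, hBl, hBr⟩ := hB
  obtain ⟨i, hi⟩ := h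
  rw [Finset.mem_inter] at hi
  obtain ⟨hiA, hiB⟩ := hi
  simp only [ivl, Finset.mem_Icc] at hiA hiB
  have key : ∀ (A B : ℕ × ℕ), (ivl A ⊆ D) → (∀ i ∈ ivl A, g i = v) →
      (B.1 - 1 ∈ D → g (B.1 - 1) ≠ v) → A.1 ≤ i → i ≤ A.2 → B.1 ≤ i → ¬ A.1 < B.1 := by
    intro A B hAsub hAall hBl h1 h2 h3 hlt
    have hm : B.1 - 1 ∈ ivl A := by
      simp only [ivl, Finset.mem_Icc]
      omega
    exact hBl (hAsub hm) (hAall _ hm)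
  have key2 : ∀ (A B : ℕ × ℕ), (ivl A ⊆ D) → (∀ i ∈ ivl A, g i = v) →
      (B.2 + 1 ∈ D → g (B.2 + 1) ≠ v) → A.1 ≤ i → i ≤ A.2 → i ≤ B.2 → ¬ B.2 < A.2 := by
    intro A B hAsub hAall hBr h1 h2 h3 hlt
    have hm : B.2 + 1 ∈ ivl A := by
      simp only [ivl, Finset.mem_Icc]
      omega
    exact hBr (hAsub hm) (hAall _ hm)
  have e1 : A.1 = B.1 := by
    rcases lt_trichotomy A.1 B.1 with h' | h' | h'
    · exact absurd h' (key A B hAsub hAall hBl hiA.1 hiA.2 hiB.1)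
    · exact h'
    · exact absurd h' (key B A hBsub hBall hAl hiB.1 hiB.2 hiA.1)
  have e2 : A.2 = B.2 := by
    rcases lt_trichotomy A.2 B.2 with h' | h' | h'
    · exact absurd h' (key2 B A hBsub hBall hAr hiB.1 hiB.2 hiA.2)
    · exact h'
    · exact absurd h' (key2 A B hAsub hAall hBr hiA.1 hiA.2 hiB.2)
  exact Prod.ext e1 e2

/-- If `s` takes value `true` somewhere in `Icc l u` (with `1 ≤ l`), there is a run. -/
lemma exists_run {l u : ℕ} (hl : 1 ≤ l) {s : ℕ → Bool} {i : ℕ}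
    (hi : i ∈ Finset.Icc l u) (hs : s i = true) :
    (runs (Finset.Icc l u) s true).Nonempty := by
  rw [Finset.mem_Icc] at hi
  set S1 : Finset ℕ := (Finset.Icc l i).filter (fun a => ∀ j ∈ Finset.Icc a i, s j = true) with hS1
  set S2 : Finset ℕ := (Finset.Icc i u).filter (fun b => ∀ j ∈ Finset.Icc i b, s j = true) with hS2
  have hiS1 : i ∈ S1 := by
    simp only [hS1, Finset.mem_filter, Finset.mem_Icc]
    refine ⟨⟨hi.1, le_refl i⟩, fun j hj => ?_⟩
    have : j = i := le_antisymm hj.2 hj.1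
    rwa [this]
  have hiS2 : i ∈ S2 := by
    simp only [hS2, Finset.mem_filter, Finset.mem_Icc]
    refine ⟨⟨le_refl i, hi.2⟩, fun j hj => ?_⟩
    have : j = i := le_antisymm hj.2 hj.1
    rwa [this]
  have hne1 : S1.Nonempty := ⟨i, hiS1⟩
  have hne2 : S2.Nonempty := ⟨i, hiS2⟩
  set a := S1.min' hne1 with ha
  set b := S2.max' hne2 with hb
  have haS : a ∈ S1 := Finset.min'_mem _ _
  have hbS : b ∈ S2 := Finset.max'_mem _ _
  simp only [hS1, Finset.mem_filter, Finset.mem_Icc] at haS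
  simp only [hS2, Finset.mem_filter, Finset.mem_Icc] at hbS
  refine ⟨(a, b), ?_⟩
  rw [mem_runs]
  have hab : a ≤ b := le_trans haS.1.2 hbS.1.1
  have hsub : ivl (a, b) ⊆ Finset.Icc l u := by
    simp only [ivl]
    apply Finset.Icc_subset_Icc haS.1.1 hbS.1.2
  refine ⟨?_, ?_, hab, hsub, ?_, ?_, ?_⟩
  · rw [Finset.mem_Icc]; exact ⟨haS.1.1, le_trans haS.1.2 hi.2⟩
  · rw [Finset.mem_Icc]; exact ⟨le_trans hi.1 hbS.1.1, hbS.1.2⟩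
  · intro j hj
    simp only [ivl, Finset.mem_Icc] at hj
    rcases le_or_gt j i with h' | h'
    · exact haS.2 j ⟨hj.1, h'⟩
    · exact hbS.2 j ⟨le_of_lt h', hj.2⟩
  · intro hm hcon
    rw [Finset.mem_Icc] at hm
    have ha1 : 1 ≤ a := le_trans hl haS.1.1
    have hmem : a - 1 ∈ S1 := by
      simp only [hS1, Finset.mem_filter, Finset.mem_Icc]
      refine ⟨⟨hm.1, by omega⟩, fun j hj => ?_⟩
      rcases eq_or_lt_of_le hj.1 with h' | h'
      · rw [← h']; simpa using hcon
      · exact haS.2 j ⟨by omega, hj.2⟩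
    have := Finset.min'_le _ _ hmem
    omega
  · intro hm hcon
    rw [Finset.mem_Icc] at hm
    have hmem : b + 1 ∈ S2 := by
      simp only [hS2, Finset.mem_filter, Finset.mem_Icc]
      refine ⟨⟨by omega, hm.2⟩, fun j hj => ?_⟩
      rcases eq_or_lt_of_le hj.2 with h' | h'
      · rw [h']; simpa using hcon
      · exact hbS.2 j ⟨hj.1, by omega⟩
    have := Finset.le_max' _ _ hmem
    omega

/-- LARM satisfies the Alarm Timing property (Property 8). -/
theorem larm_alarm_timing (n : ℕ) (hn : 1 ≤ n)
    (α : Finset ℕ → (ℕ → Bool) → ℝ) (β : ℕ → ℝ)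
    (hα : AlphaSpec α) (hβ : BetaSpec β)
    (g p q : ℕ → Bool) (A : ℕ × ℕ) (hA : A ∈ runs (dom n) g true)
    (hpq : ∀ i ∈ dom n, i ∉ ivl A → p i = q i)
    (hcard : (runs (ivl A) p true).card = (runs (ivl A) q true).card)
    (hones : (ones (dom n) p).card = (ones (dom n) q).card)
    (hpne : (ones (ivl A) p).Nonempty) (hqne : (ones (ivl A) q).Nonempty)
    (hmin : (ones (ivl A) p).min' hpne < (ones (ivl A) q).min' hqne) :
    LARM n α β g p > LARM n α β g q := by
  have hA' := hA
  rw [mem_runs] at hA'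
  obtain ⟨hA1, hA2, hAle, hAsub, hAall, hAml, hAmr⟩ := hA'
  have hfalse : ∀ N ∈ runs (dom n) g false, ∀ i ∈ ivl N, p i = q i := by
    intro N hN i hi
    rw [mem_runs] at hN
    apply hpq i (hN.2.2.2.1 hi)
    intro hiA
    have h1 := hAall i hiA
    have h2 := hN.2.2.2.2.1 i hi
    rw [h1] at h2
    exact absurd h2 (by simp)
  have htrue : ∀ B ∈ runs (dom n) g true, B ≠ A → ∀ i ∈ ivl B, p i = q i := by
    intro B hB hne i hi
    have hsubB : ivl B ⊆ dom n := (mem_runs.mp hB).2.2.2.1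
    apply hpq i (hsubB hi)
    intro hiA
    exact hne (runs_eq_of_overlap hB hA ⟨i, Finset.mem_inter.mpr ⟨hi, hiA⟩⟩)
  have hsum2 : ∑ N ∈ runs (dom n) g false, ((runs (ivl N) p true).card : ℝ)
      = ∑ N ∈ runs (dom n) g false, ((runs (ivl N) q true).card : ℝ) := by
    apply Finset.sum_congr rfl
    intro N hN
    rw [runs_eq_of_eqOn (hfalse N hN) true]
  have hsum3 : ∑ N ∈ runs (dom n) g false, β ((ones (ivl N) p).card)
      = ∑ N ∈ runs (dom n) g false, β ((ones (ivl N) q).card) := by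
    apply Finset.sum_congr rfl
    intro N hN
    rw [ones_eq_of_eqOn (hfalse N hN)]
  have honesA : (ones (ivl A) p).card = (ones (ivl A) q).card := by
    have hsplit : ∀ s : ℕ → Bool, (ones (dom n) s).card
        = (ones (ivl A) s).card + (ones (dom n \ ivl A) s).card := by
      intro s
      rw [ones, ones, ones, ← Finset.card_union_of_disjoint
        (Finset.disjoint_filter_filter Finset.disjoint_sdiff),
        ← Finset.filter_union, Finset.union_sdiff_of_subset hAsub]
    have houter : ones (dom n \ ivl A) p = ones (dom n \ ivl A) q := by
      apply ones_eq_of_eqOn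
      intro i hi
      rw [Finset.mem_sdiff] at hi
      exact hpq i hi.1 hi.2
    have h := hones
    rw [hsplit p, hsplit q, houter] at h
    omega
  have halpha : α (ivl A) q < α (ivl A) p := hα.timing (ivl A) p q honesA hpne hqne hmin
  have hA1' : 1 ≤ A.1 := by
    have h := hA1
    rw [dom, Finset.mem_Icc] at h
    exact h.1
  have hrunp : 0 < (runs (ivl A) p true).card := by
    obtain ⟨i, hi⟩ := hpne
    rw [ones, Finset.mem_filter] at hi
    exact Finset.card_pos.mpr (exists_run hA1' (by simpa [ivl] using hi.1) hi.2)
  have hrunq : 0 < (runs (ivl A) q true).card := hcard ▸ hrunp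
  set F := runs (dom n) g true with hF
  have hfilter : F.filter (fun B => 0 < (runs (ivl B) p true).card)
      = F.filter (fun B => 0 < (runs (ivl B) q true).card) := by
    apply Finset.filter_congr
    intro B hB
    by_cases hBA : B = A
    · subst hBA
      simp only [hrunp, hrunq]
    · rw [runs_eq_of_eqOn (htrue B hB hBA) true]
  have hAfilt : A ∈ F.filter (fun B => 0 < (runs (ivl B) p true).card) :=
    Finset.mem_filter.mpr ⟨hA, hrunp⟩
  have hterm : ∀ B ∈ (F.filter (fun B => 0 < (runs (ivl B) p true).card)).erase A,
      (α (ivl B) p + 1) / 2 ^ ((runs (ivl B) p true).card)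
      = (α (ivl B) q + 1) / 2 ^ ((runs (ivl B) q true).card) := by
    intro B hB
    rw [Finset.mem_erase, Finset.mem_filter] at hB
    rw [runs_eq_of_eqOn (htrue B hB.2.1 hB.1) true,
      hα.restrict (ivl B) p q (htrue B hB.2.1 hB.1)]
  have key : ∑ B ∈ F.filter (fun B => 0 < (runs (ivl B) q true).card),
        (α (ivl B) q + 1) / 2 ^ ((runs (ivl B) q true).card)
      < ∑ B ∈ F.filter (fun B => 0 < (runs (ivl B) p true).card),
        (α (ivl B) p + 1) / 2 ^ ((runs (ivl B) p true).card) := by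
    rw [← hfilter]
    rw [← Finset.add_sum_erase _ _ hAfilt, ← Finset.add_sum_erase _ _ hAfilt]
    rw [Finset.sum_congr rfl hterm]
    have h2pos : (0:ℝ) < 2 ^ ((runs (ivl A) p true).card) := by positivity
    have hAterm : (α (ivl A) q + 1) / 2 ^ ((runs (ivl A) q true).card)
        < (α (ivl A) p + 1) / 2 ^ ((runs (ivl A) p true).card) := by
      rw [← hcard]
      gcongr
    linarith
  have hcF : (0:ℝ) < ((F.card : ℕ) : ℝ) := by
    have h : 0 < F.card := Finset.card_pos.mpr ⟨A, hA⟩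
    exact_mod_cast h
  have hc : (0:ℝ) < 1 / (F.card : ℝ) := by positivity
  have h1 := mul_lt_mul_of_pos_left key hc
  unfold LARM
  rw [← hF]
  linarith [hsum2, hsum3]


end TSAD
end

section
/- Let g be a ground truth and p, q predictions of length n, and let α, β be as specified. Suppose A ∈ I_1(g), i* < i** are positions in A, p(i) = q(i) for all i ∉ {i*, i**}, p(i*) = 1, q(i*) = 0, p(i**) = 0, q(i**) = 1, and |I_1(p_A)| ≤ |I_1(q_A)|. Then LARM(g,p) > LARM(g,q). (LARM satisfies the Early Bias property.) -/
namespace TSAD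

open Finset

/-- Two maximal runs (same value) that share a point are equal. -/
lemma runs_eq_of_mem (D : Finset ℕ) (g : ℕ → Bool) (v : Bool) (A B : ℕ × ℕ)
    (hA : A ∈ runs D g v) (hB : B ∈ runs D g v) (i : ℕ)
    (hiA : i ∈ ivl A) (hiB : i ∈ ivl B) : A = B := by
  simp only [runs, Finset.mem_filter, Finset.mem_product] at hA hB
  obtain ⟨-, -, hAsub, hAval, hAl, hAr⟩ := hA
  obtain ⟨-, -, hBsub, hBval, hBl, hBr⟩ := hB
  simp only [ivl, Finset.mem_Icc] at hiA hiB
  have h1 : A.1 = B.1 := by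
    by_contra hne
    rcases Nat.lt_or_ge A.1 B.1 with h | h
    · have hm : B.1 - 1 ∈ ivl A := by simp only [ivl, Finset.mem_Icc]; omega
      exact hBl (hAsub hm) (hAval _ hm)
    · have h' : B.1 < A.1 := by omega
      have hm : A.1 - 1 ∈ ivl B := by simp only [ivl, Finset.mem_Icc]; omega
      exact hAl (hBsub hm) (hBval _ hm)
  have h2 : A.2 = B.2 := by
    by_contra hne
    rcases Nat.lt_or_ge A.2 B.2 with h | h
    · have hm : A.2 + 1 ∈ ivl B := by simp only [ivl, Finset.mem_Icc]; omega
      exact hAr (hBsub hm) (hBval _ hm)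
    · have h' : B.2 < A.2 := by omega
      have hm : B.2 + 1 ∈ ivl A := by simp only [ivl, Finset.mem_Icc]; omega
      exact hBr (hAsub hm) (hAval _ hm)
  exact Prod.ext h1 h2

/-- If `p` takes value `true` somewhere in `[a,b]` (with `1 ≤ a`), there is a maximal
`true`-run of `p` inside `[a,b]`. -/
lemma exists_run_s9 (a b i : ℕ) (ha : 1 ≤ a) (hai : a ≤ i) (hib : i ≤ b) (p : ℕ → Bool)
    (hp : p i = true) : (runs (Finset.Icc a b) p true).Nonempty := by
  classical
  set T := (Finset.Icc i b).filter (fun u => ∀ k ∈ Finset.Icc i u, p k = true) with hT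
  have hiT : i ∈ T := by
    simp only [hT, Finset.mem_filter, Finset.mem_Icc]
    exact ⟨⟨le_refl i, hib⟩, fun k hk => by
      have : k = i := by omega
      simpa [this] using hp⟩
  set L := (Finset.Icc a i).filter (fun l => ∀ k ∈ Finset.Icc l i, p k = true) with hL
  have hiL : i ∈ L := by
    simp only [hL, Finset.mem_filter, Finset.mem_Icc]
    exact ⟨⟨hai, le_refl i⟩, fun k hk => by
      have : k = i := by omega
      simpa [this] using hp⟩
  set u := T.max' ⟨i, hiT⟩ with hu
  set l := L.min' ⟨i, hiL⟩ with hl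
  have huT : u ∈ T := Finset.max'_mem _ _
  have hlL : l ∈ L := Finset.min'_mem _ _
  simp only [hT, Finset.mem_filter, Finset.mem_Icc] at huT
  simp only [hL, Finset.mem_filter, Finset.mem_Icc] at hlL
  obtain ⟨⟨hiu, hub⟩, hup⟩ := huT
  obtain ⟨⟨hal, hli⟩, hlp⟩ := hlL
  refine ⟨(l, u), ?_⟩
  simp only [runs, Finset.mem_filter, Finset.mem_product, Finset.mem_Icc]
  refine ⟨⟨⟨hal, hli.trans hib⟩, ⟨hai.trans hiu, hub⟩⟩, hli.trans hiu, ?_, ?_, ?_, ?_⟩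
  · intro k hk
    simp only [ivl, Finset.mem_Icc] at hk ⊢
    omega
  · intro k hk
    simp only [ivl, Finset.mem_Icc] at hk
    rcases Nat.le_total k i with h | h
    · exact hlp k (by omega)
    · exact hup k (by omega)
  · intro hm hval
    have hl1 : 1 ≤ l := ha.trans hal
    have hmem : l - 1 ∈ L := by
      simp only [hL, Finset.mem_filter, Finset.mem_Icc]
      refine ⟨⟨hm.1, by omega⟩, fun k hk => ?_⟩
      rcases Nat.eq_or_lt_of_le hk.1 with h | h
      · simpa [← h] using hval
      · exact hlp k (by omega)
    have := Finset.min'_le L _ hmem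
    omega
  · intro hm hval
    have hmem : u + 1 ∈ T := by
      simp only [hT, Finset.mem_filter, Finset.mem_Icc]
      refine ⟨⟨by omega, hm.2⟩, fun k hk => ?_⟩
      rcases Nat.lt_or_ge k (u + 1) with h | h
      · exact hup k (by omega)
      · have : k = u + 1 := by omega
        simpa [this] using hval
    have := Finset.le_max' T _ hmem
    omega

/-- LARM satisfies the Early Bias property (Property 9). -/
theorem larm_early_bias (n : ℕ) (hn : 1 ≤ n)
    (α : Finset ℕ → (ℕ → Bool) → ℝ) (β : ℕ → ℝ)
    (hα : AlphaSpec α) (hβ : BetaSpec β)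
    (g p q : ℕ → Bool) (A : ℕ × ℕ) (hA : A ∈ runs (dom n) g true)
    (iStar iStarStar : ℕ) (hi : iStar ∈ ivl A) (hii : iStarStar ∈ ivl A)
    (hlt : iStar < iStarStar)
    (hpq : ∀ i ∈ dom n, i ≠ iStar → i ≠ iStarStar → p i = q i)
    (hpi : p iStar = true) (hqi : q iStar = false)
    (hpii : p iStarStar = false) (hqii : q iStarStar = true)
    (hcard : (runs (ivl A) p true).card ≤ (runs (ivl A) q true).card) :
    LARM n α β g p > LARM n α β g q := by
  classical
  have hA' := hA
  simp only [runs, Finset.mem_filter, Finset.mem_product] at hA'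
  obtain ⟨⟨hA1, hA2⟩, hAle, hAsub, hAval, -, -⟩ := hA'
  have hidom : iStar ∈ dom n := hAsub hi
  have hiidom : iStarStar ∈ dom n := hAsub hii
  have hne : iStar ≠ iStarStar := Nat.ne_of_lt hlt
  -- p and q agree on every false run of g
  have key0 : ∀ N ∈ runs (dom n) g false, ∀ i ∈ ivl N, p i = q i := by
    intro N hN i hiN
    simp only [runs, Finset.mem_filter, Finset.mem_product] at hN
    obtain ⟨-, -, hNsub, hNval, -, -⟩ := hN
    have hgi : g i = false := hNval i hiN
    have h1 : i ≠ iStar := fun h => by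
      rw [h] at hgi; rw [hAval iStar hi] at hgi; exact Bool.noConfusion hgi
    have h2 : i ≠ iStarStar := fun h => by
      rw [h] at hgi; rw [hAval iStarStar hii] at hgi; exact Bool.noConfusion hgi
    exact hpq i (hNsub hiN) h1 h2
  -- p and q agree on every true run of g other than A
  have key1 : ∀ B ∈ runs (dom n) g true, B ≠ A → ∀ i ∈ ivl B, p i = q i := by
    intro B hB hBA i hiB
    have h1 : i ≠ iStar := fun h => hBA (runs_eq_of_mem _ g true B A hB hA i hiB (h ▸ hi))
    have h2 : i ≠ iStarStar := fun h => hBA (runs_eq_of_mem _ g true B A hB hA i hiB (h ▸ hii))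
    simp only [runs, Finset.mem_filter, Finset.mem_product] at hB
    exact hpq i (hB.2.2.1 hiB) h1 h2
  -- positivity of run counts
  have hA1ge : 1 ≤ A.1 := by
    simp only [dom, Finset.mem_Icc] at hA1; exact hA1.1
  have hiA' : A.1 ≤ iStar ∧ iStar ≤ A.2 := by
    simpa only [ivl, Finset.mem_Icc] using hi
  have hcp : 0 < (runs (ivl A) p true).card := by
    have h := exists_run_s9 A.1 A.2 iStar hA1ge hiA'.1 hiA'.2 p hpi
    simpa only [ivl] using Finset.card_pos.2 h
  have hcq : 0 < (runs (ivl A) q true).card := hcp.trans_le hcard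
  -- the α inequality at A
  have hαlt : α (ivl A) q < α (ivl A) p := by
    set p' : ℕ → Bool := fun k =>
      if k = iStar then true else if k = iStarStar then false else q k with hp'
    have hrest : α (ivl A) p = α (ivl A) p' := by
      refine hα.restrict _ _ _ ?_
      intro i hiA
      by_cases h1 : i = iStar
      · simp [hp', h1, hpi]
      · by_cases h2 : i = iStarStar
        · simp [hp', h2, hne.symm, hpii]
        · simp only [hp', h1, h2, if_false]
          exact hpq i (hAsub hiA) h1 h2
    rw [hrest]
    refine hα.earlyBias (ivl A) p' q iStar iStarStar hi hii hlt ?_ ?_ hqi hqii ?_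
    · simp [hp']
    · simp [hp', hne.symm]
    · intro k hk1 hk2; simp [hp', hk1, hk2]
  -- inequality of the A-terms
  have hterm : (α (ivl A) q + 1) / 2 ^ ((runs (ivl A) q true).card) <
      (α (ivl A) p + 1) / 2 ^ ((runs (ivl A) p true).card) := by
    have hppos : (0:ℝ) < 2 ^ ((runs (ivl A) p true).card) := by positivity
    have hqpos : (0:ℝ) < 2 ^ ((runs (ivl A) q true).card) := by positivity
    have hmono : (2:ℝ) ^ ((runs (ivl A) p true).card) ≤
        2 ^ ((runs (ivl A) q true).card) :=
      pow_le_pow_right₀ (by norm_num) hcard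
    have h0p : (0:ℝ) ≤ α (ivl A) p + 1 := by
      have := (hα.mem_Ico (ivl A) p).1; linarith
    calc (α (ivl A) q + 1) / 2 ^ ((runs (ivl A) q true).card)
        < (α (ivl A) p + 1) / 2 ^ ((runs (ivl A) q true).card) := by
          apply div_lt_div_of_pos_right ?_ hqpos
          linarith
      _ ≤ (α (ivl A) p + 1) / 2 ^ ((runs (ivl A) p true).card) := by
          gcongr
  -- the false-run sums coincide
  have hsum2 : ∑ N ∈ runs (dom n) g false, ((runs (ivl N) p true).card : ℝ)
      = ∑ N ∈ runs (dom n) g false, ((runs (ivl N) q true).card : ℝ) :=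
    Finset.sum_congr rfl (fun N hN => by rw [runs_congr _ _ _ (key0 N hN)])
  have hsum3 : ∑ N ∈ runs (dom n) g false, β ((ones (ivl N) p).card)
      = ∑ N ∈ runs (dom n) g false, β ((ones (ivl N) q).card) :=
    Finset.sum_congr rfl (fun N hN => by rw [ones_congr _ _ _ (key0 N hN)])
  -- the true-run sums differ exactly at A
  have hmain :
      (∑ B ∈ (runs (dom n) g true).filter (fun B => 0 < (runs (ivl B) p true).card),
        (α (ivl B) p + 1) / 2 ^ ((runs (ivl B) p true).card))
      - (∑ B ∈ (runs (dom n) g true).filter (fun B => 0 < (runs (ivl B) q true).card),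
        (α (ivl B) q + 1) / 2 ^ ((runs (ivl B) q true).card))
      = (α (ivl A) p + 1) / 2 ^ ((runs (ivl A) p true).card)
        - (α (ivl A) q + 1) / 2 ^ ((runs (ivl A) q true).card) := by
    rw [Finset.sum_filter, Finset.sum_filter, ← Finset.sum_sub_distrib]
    rw [Finset.sum_eq_single A]
    · rw [if_pos hcp, if_pos hcq]
    · intro B hB hBA
      have hru : runs (ivl B) p true = runs (ivl B) q true :=
        runs_congr _ _ _ (key1 B hB hBA) true
      have hαB : α (ivl B) p = α (ivl B) q := hα.restrict _ _ _ (key1 B hB hBA)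
      rw [hru, hαB, sub_self]
    · intro hAnot; exact absurd hA hAnot
  have hScard : 0 < ((runs (dom n) g true).card : ℝ) := by
    exact_mod_cast Finset.card_pos.2 ⟨A, hA⟩
  have hdiff : LARM n α β g p - LARM n α β g q
      = (1 / ((runs (dom n) g true).card : ℝ)) *
        ((α (ivl A) p + 1) / 2 ^ ((runs (ivl A) p true).card)
          - (α (ivl A) q + 1) / 2 ^ ((runs (ivl A) q true).card)) := by
    unfold LARM
    rw [hsum2, hsum3, ← hmain]
    ring
  have : 0 < LARM n α β g p - LARM n α β g q := by
    rw [hdiff]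
    exact mul_pos (by positivity) (by linarith)
  linarith

end TSAD
end
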